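/- arXiv:1811.06338 — 4 statements merged into one kernel-verified Lean document; each statement's English description precedes it below -/
import Mathlib

section
/- Let σ > 0 and let ρ ∈ L²(ℝ) ∩ L^∞(ℝ) with support contained in [−σ,σ], and define p(t) = (1/(2π))·∫_{−σ}^{σ} ρ(ξ)·e^{iξt} dξ. Then for every α = (α_n)_{n∈ℤ} ∈ ℓ²(ℤ), the series f(t) = Σ_{n∈ℤ} √(π/σ)·p(t + nπ/σ)·α_n converges absolutely for every t ∈ ℝ, the resulting function f belongs to L²(ℝ), and ‖f‖_{L²(ℝ)} ≤ ‖ρ‖_{L^∞}·‖α‖_{ℓ²}. -/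
/-!
Put `T = 2σ`, lift `ρ` to the circle `ℝ/Tℤ`, and let `A` be the `L²` function on the circle whose
Fourier coefficients are `α`. Since `ξ ↦ e^{2πiξ/T}` is a character of the circle,
`√(2π/T) p(t + 2πn/T)` is `√(T/2π)` times the `(-n)`-th Fourier coefficient of `ξ ↦ e^{iξt} ρ(ξ)`,
so by Parseval the series equals `Φ(t) = (2πT)^{-1/2} ∫_{-σ}^{σ} e^{iξt} ρ(ξ) A(ξ) dξ`. For the same
reason `Φ(t + 2πk/T)`, `k ∈ ℤ`, are `√(T/2π)` times the Fourier coefficients of `ξ ↦ e^{iξt} ρ A`,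
hence `∑ₖ |Φ(t + 2πk/T)|² = (T/2π) ‖ρ A‖²`; integrating over `t ∈ (0, 2π/T]` gives
`‖Φ‖_{L²(ℝ)} = ‖ρ A‖_{L²(ℝ/Tℤ)} ≤ ‖ρ‖_∞ ‖α‖_{ℓ²}` (normalised measure on the circle).
-/

open MeasureTheory Set Complex AddCircle
open scoped Real ENNReal ComplexConjugate

theorem summable_norm_mul_of_summable_sq {ι R : Type*} [SeminormedRing R] {f g : ι → R}
    (hf : Summable fun i => ‖f i‖ ^ 2) (hg : Summable fun i => ‖g i‖ ^ 2) :
    Summable fun i => ‖f i * g i‖ := by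
  refine ((hf.add hg).div_const 2).of_nonneg_of_le (fun i => norm_nonneg _) fun i => ?_
  nlinarith [norm_mul_le (f i) (g i), two_mul_le_add_sq ‖f i‖ ‖g i‖]

theorem eLpNorm_two_sq_eq_lintegral {α E : Type*} [MeasurableSpace α] [NormedAddCommGroup E]
    (f : α → E) (μ : Measure α) : eLpNorm f 2 μ ^ 2 = ∫⁻ x, ‖f x‖ₑ ^ 2 ∂μ := by
  simpa using eLpNorm_nnreal_pow_eq_lintegral (f := f) (μ := μ) (p := 2) two_ne_zero

theorem lintegral_eq_setLIntegral_Ioc_tsum {δ : ℝ} (hδ : 0 < δ) {f : ℝ → ℝ≥0∞}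
    (hf : Measurable f) :
    ∫⁻ x, f x = ∫⁻ x in Ioc 0 δ, ∑' k : ℤ, f (x + k * δ) := by
  let e : ℤ → AddSubgroup.zmultiples δ := fun k => ⟨k • δ, AddSubgroup.zsmul_mem_zmultiples δ k⟩
  have he : Function.Bijective e :=
    ⟨fun _ _ h => (zsmul_left_strictMono hδ).injective (congrArg Subtype.val h),
      fun ⟨_, hy⟩ => (AddSubgroup.mem_zmultiples_iff.mp hy).imp fun _ hk => Subtype.ext hk⟩
  rw [(isAddFundamentalDomain_Ioc hδ 0 volume).lintegral_eq_tsum'', zero_add,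
    lintegral_tsum (f := fun (k : ℤ) x => f (x + k * δ))
      fun k => (hf.comp (measurable_add_const _)).aemeasurable,
    ← (Equiv.ofBijective e he).tsum_eq]
  refine tsum_congr fun k => setLIntegral_congr_fun measurableSet_Ioc fun x _ => ?_
  simp [e, add_comm]

theorem norm_exp_I_mul_ofReal_mul_ofReal (x t : ℝ) : ‖exp (I * x * t)‖ = 1 := by
  rw [show I * x * t = ((x * t : ℝ) : ℂ) * I by push_cast; ring, norm_exp_ofReal_mul_I]

namespace AddCircle

variable {T : ℝ} [Fact (0 < T)]

theorem fourierCoeff_conj (f : AddCircle T → ℂ) (n : ℤ) :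
    fourierCoeff (fun z => conj (f z)) n = conj (fourierCoeff f (-n)) := by
  simp only [fourierCoeff, smul_eq_mul, ← integral_conj, map_mul, neg_neg, fourier_neg]

theorem hasSum_fourierCoeff_neg_mul_fourierCoeff {f g : AddCircle T → ℂ}
    (hf : MemLp f 2 haarAddCircle) (hg : MemLp g 2 haarAddCircle) :
    HasSum (fun n => fourierCoeff f (-n) * fourierCoeff g n)
      (∫ z, f z * g z ∂haarAddCircle) := by
  have hf' : MemLp (fun z => conj (f z)) 2 haarAddCircle := hf.star
  have hinner : ∫ z, f z * g z ∂haarAddCircle = inner ℂ (hf'.toLp _) (hg.toLp g) := by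
    rw [L2.inner_def]
    refine integral_congr_ae ?_
    filter_upwards [hf'.coeFn_toLp, hg.coeFn_toLp] with z hfz hgz
    simp [hfz, hgz, mul_comm]
  rw [hinner]
  refine (fourierBasis.hasSum_inner_mul_inner _ _).congr_fun fun n => ?_
  rw [← inner_conj_symm, ← HilbertBasis.repr_apply_apply, ← HilbertBasis.repr_apply_apply,
    fourierBasis_repr, fourierBasis_repr, fourierCoeff_congr_ae hf'.coeFn_toLp,
    fourierCoeff_congr_ae hg.coeFn_toLp, fourierCoeff_conj, conj_conj]

theorem hasSum_sq_fourierCoeff_of_memLp {f : AddCircle T → ℂ} (hf : MemLp f 2 haarAddCircle) :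
    HasSum (fun n => ‖fourierCoeff f n‖ ^ 2) (∫ z, ‖f z‖ ^ 2 ∂haarAddCircle) := by
  convert hasSum_sq_fourierCoeff (hf.toLp f) using 1
  · rw [fourierCoeff_congr_ae hf.coeFn_toLp]
  · refine integral_congr_ae ?_
    filter_upwards [hf.coeFn_toLp] with z hz
    rw [hz]

theorem tsum_enorm_sq_fourierCoeff_of_memLp {f : AddCircle T → ℂ}
    (hf : MemLp f 2 haarAddCircle) :
    ∑' n, ‖fourierCoeff f n‖ₑ ^ 2 = ∫⁻ z, ‖f z‖ₑ ^ 2 ∂haarAddCircle := by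
  have h := hasSum_sq_fourierCoeff_of_memLp hf
  simp_rw [← ofReal_norm, ← ENNReal.ofReal_pow (norm_nonneg _)]
  rw [← ENNReal.ofReal_tsum_of_nonneg (fun n => by positivity) h.summable, h.tsum_eq,
    ofReal_integral_eq_lintegral_ofReal hf.integrable_norm_pow' (.of_forall fun z => by positivity)]

theorem eLpNorm_eq_sqrt_tsum_sq_fourierCoeff {f : AddCircle T → ℂ}
    (hf : MemLp f 2 haarAddCircle) :
    eLpNorm f 2 haarAddCircle = ENNReal.ofReal √(∑' n, ‖fourierCoeff f n‖ ^ 2) := by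
  refine (ENNReal.pow_right_strictMono two_ne_zero).injective ?_
  have h := hasSum_sq_fourierCoeff_of_memLp hf
  rw [← ENNReal.ofReal_pow (Real.sqrt_nonneg _), Real.sq_sqrt (tsum_nonneg fun n => by positivity),
    eLpNorm_two_sq_eq_lintegral, ← tsum_enorm_sq_fourierCoeff_of_memLp hf,
    ENNReal.ofReal_tsum_of_nonneg (fun n => by positivity) h.summable]
  simp_rw [ENNReal.ofReal_pow (norm_nonneg _), ofReal_norm]

theorem exists_memLp_fourierCoeff_eq {α : ℤ → ℂ} (hα : Summable fun n => ‖α n‖ ^ 2) :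
    ∃ A : AddCircle T → ℂ, MemLp A 2 haarAddCircle ∧ fourierCoeff A = α := by
  have hα2 : Memℓp α 2 := memℓp_gen (by simpa using hα)
  refine ⟨fourierBasis.repr.symm ⟨α, hα2⟩, Lp.memLp _, funext fun n => ?_⟩
  rw [← fourierBasis_repr, LinearIsometryEquiv.apply_symm_apply]

theorem ae_haarAddCircle_of_ae_restrict {a : ℝ} {P : ℝ → Prop}
    (h : ∀ᵐ x ∂volume.restrict (Ioc a (a + T)), P x) :
    ∀ᵐ z ∂haarAddCircle, P (equivIoc T a z) := by
  have hmp : MeasurePreserving (fun z : AddCircle T => (equivIoc T a z : ℝ)) volume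
      (volume.restrict (Ioc a (a + T))) :=
    (measurePreserving_subtype_coe measurableSet_Ioc).comp (measurePreserving_equivIoc T)
  have hac : (haarAddCircle : Measure (AddCircle T)) ≪ volume := by
    rw [volume_eq_smul_haarAddCircle]
    exact Measure.absolutelyContinuous_smul (by simp [(Fact.out : 0 < T)])
  exact hac.ae_le (hmp.quasiMeasurePreserving.ae h)

theorem measurable_equivIoc_coe (a : ℝ) :
    Measurable fun z : AddCircle T => (equivIoc T a z : ℝ) :=
  measurable_subtype_coe.comp (measurableEquivIoc T a).measurable

theorem exp_equivIoc_mul_add_int_mul (a : ℝ) (z : AddCircle T) (t : ℝ) (k : ℤ) :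
    exp (I * (equivIoc T a z : ℝ) * ((t + k * (2 * π / T) : ℝ) : ℂ)) =
      fourier k z * exp (I * (equivIoc T a z : ℝ) * t) := by
  have hz : fourier k z = exp (2 * π * I * k * (equivIoc T a z : ℝ) / T) := by
    conv_lhs => rw [← coe_equivIoc (a := a) (y := z)]
    exact fourier_coe_apply
  have hT : (T : ℂ) ≠ 0 := ofReal_ne_zero.mpr (Fact.out : 0 < T).ne'
  rw [hz, ← exp_add]
  congr 1
  push_cast
  field_simp
  ring

section PeriodFourierIntegral

variable (a : ℝ)

/-- `equivIoc T a z` is the representative of `z` in `(a, a + T]`, so this is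
`t ↦ (2πT)^{-1/2} ∫_a^{a+T} e^{iξt} ψ(ξ) dξ`. -/
noncomputable def periodFourierIntegral (ψ : AddCircle T → ℂ) (t : ℝ) : ℂ :=
  √(T / (2 * π)) * ∫ z, exp (I * (equivIoc T a z : ℝ) * t) * ψ z ∂haarAddCircle

theorem periodFourierIntegral_add_int_mul (ψ : AddCircle T → ℂ) (t : ℝ) (k : ℤ) :
    periodFourierIntegral a ψ (t + k * (2 * π / T)) =
      √(T / (2 * π)) * fourierCoeff (fun z => exp (I * (equivIoc T a z : ℝ) * t) * ψ z) (-k) := by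
  refine congrArg _ (integral_congr_ae (.of_forall fun z => ?_))
  dsimp only
  rw [exp_equivIoc_mul_add_int_mul, neg_neg, smul_eq_mul, mul_assoc]

theorem continuous_periodFourierIntegral {ψ : AddCircle T → ℂ}
    (hψ : Integrable ψ haarAddCircle) : Continuous (periodFourierIntegral a ψ) := by
  refine continuous_const.mul (continuous_of_dominated (bound := fun z => ‖ψ z‖) (fun t => ?_)
    (fun t => ?_) hψ.norm (.of_forall fun z => by fun_prop))
  · have := measurable_equivIoc_coe (T := T) a
    exact (by fun_prop : Measurable fun z : AddCircle T =>
      exp (I * (equivIoc T a z : ℝ) * t)).aestronglyMeasurable.mul hψ.1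
  · exact .of_forall fun z => by rw [norm_mul, norm_exp_I_mul_ofReal_mul_ofReal, one_mul]

theorem memLp_exp_mul {ψ : AddCircle T → ℂ} (hψ : MemLp ψ 2 haarAddCircle) (t : ℝ) :
    MemLp (fun z => exp (I * (equivIoc T a z : ℝ) * t) * ψ z) 2 haarAddCircle := by
  have := measurable_equivIoc_coe (T := T) a
  refine hψ.of_le_mul (c := 1) ((by fun_prop : Measurable fun z : AddCircle T =>
      exp (I * (equivIoc T a z : ℝ) * t)).aestronglyMeasurable.mul hψ.1) (.of_forall fun z => ?_)
  rw [norm_mul, norm_exp_I_mul_ofReal_mul_ofReal]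

theorem tsum_enorm_sq_periodFourierIntegral_add_int_mul {ψ : AddCircle T → ℂ}
    (hψ : MemLp ψ 2 haarAddCircle) (t : ℝ) :
    ∑' k : ℤ, ‖periodFourierIntegral a ψ (t + k * (2 * π / T))‖ₑ ^ 2 =
      ENNReal.ofReal (T / (2 * π)) * ∫⁻ z, ‖ψ z‖ₑ ^ 2 ∂haarAddCircle := by
  simp_rw [periodFourierIntegral_add_int_mul, enorm_mul, mul_pow]
  rw [ENNReal.tsum_mul_left, ← ofReal_norm, norm_real, Real.norm_of_nonneg (Real.sqrt_nonneg _),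
    ← ENNReal.ofReal_pow (Real.sqrt_nonneg _), Real.sq_sqrt (by positivity [(Fact.out : 0 < T)])]
  refine congrArg _ (((Equiv.neg ℤ).tsum_eq (fun k => ‖fourierCoeff _ k‖ₑ ^ 2)).trans ?_)
  rw [tsum_enorm_sq_fourierCoeff_of_memLp (memLp_exp_mul a hψ t)]
  simp_rw [enorm_mul, ← ofReal_norm, norm_exp_I_mul_ofReal_mul_ofReal, ENNReal.ofReal_one, one_mul]

theorem lintegral_enorm_sq_periodFourierIntegral {ψ : AddCircle T → ℂ}
    (hψ : MemLp ψ 2 haarAddCircle) :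
    ∫⁻ t, ‖periodFourierIntegral a ψ t‖ₑ ^ 2 = ∫⁻ z, ‖ψ z‖ₑ ^ 2 ∂haarAddCircle := by
  have hT : 0 < T := Fact.out
  have hcont := continuous_periodFourierIntegral a (hψ.integrable one_le_two)
  rw [lintegral_eq_setLIntegral_Ioc_tsum (δ := 2 * π / T) (by positivity)
      (hcont.measurable.enorm.pow_const 2)]
  simp_rw [tsum_enorm_sq_periodFourierIntegral_add_int_mul a hψ]
  rw [setLIntegral_const, Real.volume_Ioc, sub_zero, mul_comm, ← mul_assoc,
    ← ENNReal.ofReal_mul (by positivity), div_mul_div_cancel₀ (by positivity),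
    div_self (by positivity), ENNReal.ofReal_one, one_mul]

theorem eLpNorm_periodFourierIntegral {ψ : AddCircle T → ℂ} (hψ : MemLp ψ 2 haarAddCircle) :
    eLpNorm (periodFourierIntegral a ψ) 2 volume = eLpNorm ψ 2 haarAddCircle := by
  refine (ENNReal.pow_right_strictMono two_ne_zero).injective ?_
  simp only [eLpNorm_two_sq_eq_lintegral, lintegral_enorm_sq_periodFourierIntegral a hψ]

theorem memLp_periodFourierIntegral {ψ : AddCircle T → ℂ} (hψ : MemLp ψ 2 haarAddCircle) :
    MemLp (periodFourierIntegral a ψ) 2 volume :=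
  ⟨(continuous_periodFourierIntegral a (hψ.integrable one_le_two)).aestronglyMeasurable, by
    rw [eLpNorm_periodFourierIntegral a hψ]
    exact hψ.eLpNorm_lt_top⟩

end PeriodFourierIntegral

section LiftIoc

variable {a : ℝ} {φ : ℝ → ℂ}

theorem intervalIntegral_mul_exp_add_int_mul_eq_fourierCoeff (t : ℝ) (n : ℤ) :
    ∫ ξ in a..a + T, φ ξ * exp (I * ξ * ((t + n * (2 * π / T) : ℝ) : ℂ)) =
      T * fourierCoeff (fun z => exp (I * (equivIoc T a z : ℝ) * t) * liftIoc T a φ z) (-n) := by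
  have hT : (T : ℂ) ≠ 0 := ofReal_ne_zero.mpr (Fact.out : 0 < T).ne'
  have h : ∫ z, liftIoc T a (fun ξ => φ ξ * exp (I * ξ * ((t + n * (2 * π / T) : ℝ) : ℂ))) z
      ∂haarAddCircle =
      fourierCoeff (fun z => exp (I * (equivIoc T a z : ℝ) * t) * liftIoc T a φ z) (-n) := by
    refine integral_congr_ae (.of_forall fun z => ?_)
    show φ _ * _ = fourier (-(-n)) z • (_ * φ _)
    rw [exp_equivIoc_mul_add_int_mul, neg_neg, smul_eq_mul]
    ring
  rw [← integral_liftIoc_eq_intervalIntegral, ← h, integral_haarAddCircle, real_smul, ofReal_inv,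
    mul_inv_cancel_left₀ hT]

theorem sqrt_mul_add_int_mul_eq_fourierCoeff {p : ℝ → ℂ}
    (hp : ∀ t : ℝ, p t = (1 / (2 * π)) * ∫ ξ in a..a + T, φ ξ * exp (I * ξ * t)) (t : ℝ) (n : ℤ) :
    √(2 * π / T) * p (t + n * (2 * π / T)) =
      √(T / (2 * π)) *
        fourierCoeff (fun z => exp (I * (equivIoc T a z : ℝ) * t) * liftIoc T a φ z) (-n) := by
  have hκ : √(2 * π / T) * (T / (2 * π)) = √(T / (2 * π)) := by
    rw [← inv_div (2 * π) T, ← div_eq_mul_inv, Real.sqrt_div_self, Real.sqrt_inv]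
  rw [hp, intervalIntegral_mul_exp_add_int_mul_eq_fourierCoeff, ← hκ]
  push_cast
  ring

theorem memLp_two_liftIoc (hφ : MemLp φ ⊤ (volume.restrict (Ioc a (a + T)))) :
    MemLp (liftIoc T a φ) 2 haarAddCircle :=
  hφ.memLp_liftIoc.haarAddCircle.mono_exponent le_top

theorem hasSum_sqrt_mul_add_int_mul_mul_fourierCoeff
    (hφ : MemLp φ ⊤ (volume.restrict (Ioc a (a + T)))) {p : ℝ → ℂ}
    (hp : ∀ t : ℝ, p t = (1 / (2 * π)) * ∫ ξ in a..a + T, φ ξ * exp (I * ξ * t))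
    {A : AddCircle T → ℂ} (hA : MemLp A 2 haarAddCircle) (t : ℝ) :
    HasSum (fun n : ℤ => √(2 * π / T) * p (t + n * (2 * π / T)) * fourierCoeff A n)
      (periodFourierIntegral a (fun z => liftIoc T a φ z * A z) t) := by
  have h := (hasSum_fourierCoeff_neg_mul_fourierCoeff
    (memLp_exp_mul a (memLp_two_liftIoc hφ) t) hA).mul_left (√(T / (2 * π)) : ℂ)
  simp_rw [sqrt_mul_add_int_mul_eq_fourierCoeff hp, periodFourierIntegral]
  simpa only [mul_assoc] using h

theorem summable_norm_sqrt_mul_add_int_mul_mul_fourierCoeff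
    (hφ : MemLp φ ⊤ (volume.restrict (Ioc a (a + T)))) {p : ℝ → ℂ}
    (hp : ∀ t : ℝ, p t = (1 / (2 * π)) * ∫ ξ in a..a + T, φ ξ * exp (I * ξ * t))
    {A : AddCircle T → ℂ} (hA : MemLp A 2 haarAddCircle) (t : ℝ) :
    Summable fun n : ℤ => ‖√(2 * π / T) * p (t + n * (2 * π / T)) * fourierCoeff A n‖ := by
  have hcoeff : Summable fun n : ℤ => ‖fourierCoeff
      (fun z => exp (I * (equivIoc T a z : ℝ) * t) * liftIoc T a φ z) (-n)‖ ^ 2 :=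
    (hasSum_sq_fourierCoeff_of_memLp
      (memLp_exp_mul a (memLp_two_liftIoc hφ) t)).summable.comp_injective neg_injective
  have h := (summable_norm_mul_of_summable_sq hcoeff
    (hasSum_sq_fourierCoeff_of_memLp hA).summable).mul_left ‖(√(T / (2 * π)) : ℂ)‖
  simp_rw [sqrt_mul_add_int_mul_eq_fourierCoeff hp]
  simpa only [mul_assoc, norm_mul] using h

theorem eLpNorm_liftIoc_mul_le {A : AddCircle T → ℂ} (hA : MemLp A 2 haarAddCircle) :
    eLpNorm (fun z => liftIoc T a φ z * A z) 2 haarAddCircle ≤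
      eLpNorm φ ⊤ (volume.restrict (Ioc a (a + T))) * eLpNorm A 2 haarAddCircle := by
  refine eLpNorm_le_mul_eLpNorm_of_ae_le_mul'' 2 hA.1 ?_
  filter_upwards [ae_haarAddCircle_of_ae_restrict (a := a) (enorm_ae_le_eLpNormEssSup φ _)]
    with z hz
  rw [enorm_mul, eLpNorm_exponent_top]
  exact mul_le_mul_left hz _

end LiftIoc

end AddCircle

theorem discrete_hankel_operator_bounded_general (σ : ℝ) (hσ : 0 < σ) (ρ : ℝ → ℂ)
    (hρtop : MemLp ρ ⊤ volume)
    (p : ℝ → ℂ)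
    (hp : ∀ t : ℝ, p t = (1 / (2 * Real.pi)) *
      ∫ ξ in (-σ)..σ, ρ ξ * Complex.exp (Complex.I * ξ * t))
    (α : ℤ → ℂ) (hα : Summable fun n : ℤ => ‖α n‖ ^ 2) :
    (∀ t : ℝ, Summable fun n : ℤ =>
      ‖(Real.sqrt (Real.pi / σ) : ℂ) * p (t + n * Real.pi / σ) * α n‖) ∧
    MemLp (fun t : ℝ =>
      ∑' n : ℤ, (Real.sqrt (Real.pi / σ) : ℂ) * p (t + n * Real.pi / σ) * α n) 2 volume ∧
    eLpNorm (fun t : ℝ =>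
        ∑' n : ℤ, (Real.sqrt (Real.pi / σ) : ℂ) * p (t + n * Real.pi / σ) * α n) 2 volume ≤
      eLpNorm ρ ⊤ volume * ENNReal.ofReal (Real.sqrt (∑' n : ℤ, ‖α n‖ ^ 2)) := by
  have : Fact (0 < 2 * σ) := ⟨by positivity⟩
  obtain ⟨A, hA, rfl⟩ := exists_memLp_fourierCoeff_eq (T := 2 * σ) hα
  have hρ : MemLp ρ ⊤ (volume.restrict (Ioc (-σ) (-σ + 2 * σ))) := hρtop.restrict _
  have hp' : ∀ t : ℝ, p t = (1 / (2 * π)) *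
      ∫ ξ in (-σ)..(-σ + 2 * σ), ρ ξ * exp (I * ξ * t) := by
    simpa only [show -σ + 2 * σ = σ by ring] using hp
  have hδ : 2 * π / (2 * σ) = π / σ := by field_simp
  have hseries := hasSum_sqrt_mul_add_int_mul_mul_fourierCoeff hρ hp' hA
  have hsummable := summable_norm_sqrt_mul_add_int_mul_mul_fourierCoeff hρ hp' hA
  simp only [hδ, ← mul_div_assoc] at hseries hsummable
  have hF : (fun t : ℝ => ∑' n : ℤ, (√(π / σ) : ℂ) * p (t + n * π / σ) * fourierCoeff A n) =
      periodFourierIntegral (-σ) (fun z => liftIoc (2 * σ) (-σ) ρ z * A z) :=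
    funext fun t => (hseries t).tsum_eq
  have hψ : MemLp (fun z => liftIoc (2 * σ) (-σ) ρ z * A z) 2 haarAddCircle :=
    hA.mul' (r := 2) hρ.memLp_liftIoc.haarAddCircle
  refine ⟨hsummable, hF ▸ memLp_periodFourierIntegral _ hψ, ?_⟩
  rw [hF, eLpNorm_periodFourierIntegral _ hψ, ← eLpNorm_eq_sqrt_tsum_sq_fourierCoeff hA]
  exact (eLpNorm_liftIoc_mul_le hA).trans (mul_le_mul_left (eLpNorm_restrict_le _ _ _ _) _)

/-- If `ρ ∈ L² ∩ L^∞` is supported in `[−σ,σ]` and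
`p(t) = (1/(2π))·∫_{−σ}^{σ} ρ(ξ)e^{iξt}dξ`, then for `α ∈ ℓ²(ℤ)` the series
`f(t) = Σ_n √(π/σ)·p(t + nπ/σ)·α_n` converges absolutely for every `t`, `f ∈ L²(ℝ)`,
and `‖f‖_{L²} ≤ ‖ρ‖_∞·‖α‖_{ℓ²}`. -/
theorem discrete_hankel_operator_bounded (σ : ℝ) (hσ : 0 < σ) (ρ : ℝ → ℂ)
    (hρ2 : MemLp ρ 2 volume) (hρtop : MemLp ρ ⊤ volume)
    (hsupp : Function.support ρ ⊆ Icc (-σ) σ)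
    (p : ℝ → ℂ)
    (hp : ∀ t : ℝ, p t = (1 / (2 * Real.pi)) *
      ∫ ξ in (-σ)..σ, ρ ξ * Complex.exp (Complex.I * ξ * t))
    (α : ℤ → ℂ) (hα : Summable fun n : ℤ => ‖α n‖ ^ 2) :
    (∀ t : ℝ, Summable fun n : ℤ =>
      ‖(Real.sqrt (Real.pi / σ) : ℂ) * p (t + n * Real.pi / σ) * α n‖) ∧
    MemLp (fun t : ℝ =>
      ∑' n : ℤ, (Real.sqrt (Real.pi / σ) : ℂ) * p (t + n * Real.pi / σ) * α n) 2 volume ∧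
    eLpNorm (fun t : ℝ =>
        ∑' n : ℤ, (Real.sqrt (Real.pi / σ) : ℂ) * p (t + n * Real.pi / σ) * α n) 2 volume ≤
      eLpNorm ρ ⊤ volume * ENNReal.ofReal (Real.sqrt (∑' n : ℤ, ‖α n‖ ^ 2)) :=
  discrete_hankel_operator_bounded_general σ hσ ρ hρtop p hp α hα
end

section
/- Let σ > 0 and let p ∈ B¹_σ with I₁ = ∫₀^∞ |p(s)| ds < 1. Let K be the operator K[g](y) = ∫₀^∞ 𝒦(y,x)·g(x) dx with kernel 𝒦(y,x) = ∫₀^∞ conj(p(y+s))·p(s+x) ds. Then for ν = 1 and ν = 2, K is a bounded linear operator on L^ν([0,∞)) with ‖K[g]‖_{L^ν([0,∞))} ≤ I₁²·‖g‖_{L^ν([0,∞))}, the operator I − K is invertible on L^ν([0,∞)), and its inverse is a bounded linear operator with operator norm at most (1 − I₁²)^{−1}. -/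
/-!
The kernel is dominated by `κ(y, x) = ∫₀^∞ |p(y+s)| |p(s+x)| ds`. Since translating by a
nonnegative amount can only decrease `∫₀^∞ |p|`, Tonelli shows that every row and every column
integral of `κ` over `(0, ∞)` is at most `I₁²`. Schur's test (Hölder's inequality against the
weight `κ(y, ·)`, then Tonelli once more) bounds `K` by `I₁²` on every `L^ν`, `1 ≤ ν < ∞`, and
`I - K` is inverted by its Neumann series.
-/

open MeasureTheory Set ENNReal Function ComplexConjugate

section Schur

variable {α : Type*} [MeasurableSpace α] {μ : Measure α}

theorem ENNReal.rpow_lintegral_mul_le {g f : α → ℝ≥0∞} (hg : AEMeasurable g μ)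
    (hf : AEMeasurable f μ) {r : ℝ} (hr : 1 ≤ r) :
    (∫⁻ x, g x * f x ∂μ) ^ r ≤ (∫⁻ x, g x ∂μ) ^ (r - 1) * ∫⁻ x, g x * f x ^ r ∂μ := by
  have hr0 : 0 < r := by linarith
  have hinv : 0 ≤ r⁻¹ := inv_nonneg.2 hr0.le
  have hsub : 0 ≤ 1 - r⁻¹ := sub_nonneg.2 (inv_le_one_of_one_le₀ hr)
  have hholder := lintegral_mul_norm_pow_le hg (hg.mul (hf.pow_const r)) hsub hinv
    (sub_add_cancel 1 r⁻¹)
  have hsplit : ∀ x, g x ^ (1 - r⁻¹) * (g x * f x ^ r) ^ r⁻¹ = g x * f x := fun x => by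
    rw [mul_rpow_of_nonneg _ _ hinv, rpow_rpow_inv hr0.ne', ← mul_assoc,
      ← rpow_add_of_nonneg _ _ hsub hinv, sub_add_cancel, rpow_one]
  simp only [Pi.mul_apply, hsplit] at hholder
  calc (∫⁻ x, g x * f x ∂μ) ^ r
      ≤ ((∫⁻ x, g x ∂μ) ^ (1 - r⁻¹) * (∫⁻ x, g x * f x ^ r ∂μ) ^ r⁻¹) ^ r :=
        rpow_le_rpow hholder hr0.le
    _ = (∫⁻ x, g x ∂μ) ^ (r - 1) * ∫⁻ x, g x * f x ^ r ∂μ := by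
        rw [mul_rpow_of_nonneg _ _ hr0.le, ← rpow_mul, rpow_inv_rpow hr0.ne',
          sub_mul, one_mul, inv_mul_cancel₀ hr0.ne']

theorem ae_lt_top_of_eLpNorm_lt_top {F : α → ℝ≥0∞} (hF : AEMeasurable F μ) {ν : ℝ≥0∞}
    (hν0 : ν ≠ 0) (hν : ν ≠ ∞) (h : eLpNorm F ν μ < ∞) : ∀ᵐ y ∂μ, F y < ∞ := by
  have hr0 : 0 < ν.toReal := toReal_pos hν0 hν
  rw [eLpNorm_lt_top_iff_lintegral_rpow_enorm_lt_top hν0 hν] at h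
  filter_upwards [ae_lt_top' (hF.pow_const ν.toReal) h.ne] with y hy
  exact (rpow_lt_top_iff_of_pos hr0).1 hy

variable [SFinite μ] {κ : α → α → ℝ≥0∞} {M : ℝ≥0∞} {f : α → ℝ≥0∞}

theorem lintegral_lintegral_mul_le_of_lintegral_le (hκ : Measurable (uncurry κ))
    (hcol : ∀ᵐ x ∂μ, ∫⁻ y, κ y x ∂μ ≤ M) (hf : AEMeasurable f μ) :
    ∫⁻ y, ∫⁻ x, κ y x * f x ∂μ ∂μ ≤ M * ∫⁻ x, f x ∂μ := calc
  _ = ∫⁻ x, (∫⁻ y, κ y x ∂μ) * f x ∂μ := by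
      rw [lintegral_lintegral_swap (hκ.aemeasurable.mul hf.comp_snd)]
      exact lintegral_congr fun x => lintegral_mul_const _ hκ.of_uncurry_right
  _ ≤ ∫⁻ x, M * f x ∂μ := lintegral_mono_ae (hcol.mono fun x hx => by gcongr)
  _ = M * ∫⁻ x, f x ∂μ := lintegral_const_mul'' _ hf

/-- Schur's test. -/
theorem lintegral_rpow_lintegral_mul_le (hκ : Measurable (uncurry κ))
    (hrow : ∀ᵐ y ∂μ, ∫⁻ x, κ y x ∂μ ≤ M) (hcol : ∀ᵐ x ∂μ, ∫⁻ y, κ y x ∂μ ≤ M)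
    (hf : AEMeasurable f μ) {r : ℝ} (hr : 1 ≤ r) :
    ∫⁻ y, (∫⁻ x, κ y x * f x ∂μ) ^ r ∂μ ≤ M ^ r * ∫⁻ x, f x ^ r ∂μ := calc
  _ ≤ ∫⁻ y, M ^ (r - 1) * ∫⁻ x, κ y x * f x ^ r ∂μ ∂μ :=
      lintegral_mono_ae <| hrow.mono fun y hy =>
        (rpow_lintegral_mul_le hκ.of_uncurry_left.aemeasurable hf hr).trans (by gcongr)
  _ = M ^ (r - 1) * ∫⁻ y, ∫⁻ x, κ y x * f x ^ r ∂μ ∂μ :=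
      lintegral_const_mul'' _ (hκ.aemeasurable.mul (hf.pow_const r).comp_snd).lintegral_prod_right'
  _ ≤ M ^ (r - 1) * (M * ∫⁻ x, f x ^ r ∂μ) := by
      gcongr
      exact lintegral_lintegral_mul_le_of_lintegral_le hκ hcol (hf.pow_const r)
  _ = M ^ r * ∫⁻ x, f x ^ r ∂μ := by
      rw [← mul_assoc]
      congr 1
      simpa using (rpow_add_of_nonneg (x := M) (r - 1) 1 (by linarith) zero_le_one).symm

theorem eLpNorm_lintegral_mul_le (hκ : Measurable (uncurry κ))
    (hrow : ∀ᵐ y ∂μ, ∫⁻ x, κ y x ∂μ ≤ M) (hcol : ∀ᵐ x ∂μ, ∫⁻ y, κ y x ∂μ ≤ M)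
    (hf : AEMeasurable f μ) {ν : ℝ≥0∞} (hν1 : 1 ≤ ν) (hν : ν ≠ ∞) :
    eLpNorm (fun y => ∫⁻ x, κ y x * f x ∂μ) ν μ ≤ M * eLpNorm f ν μ := by
  have hν0 : ν ≠ 0 := (zero_lt_one.trans_le hν1).ne'
  have hr : 1 ≤ ν.toReal := by simpa using toReal_mono hν hν1
  have hr0 : 0 < ν.toReal := by linarith
  simp only [eLpNorm_eq_lintegral_rpow_enorm_toReal hν0 hν, enorm_eq_self]
  calc (∫⁻ y, (∫⁻ x, κ y x * f x ∂μ) ^ ν.toReal ∂μ) ^ (1 / ν.toReal)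
      ≤ (M ^ ν.toReal * ∫⁻ x, f x ^ ν.toReal ∂μ) ^ (1 / ν.toReal) := by
        gcongr
        exact lintegral_rpow_lintegral_mul_le hκ hrow hcol hf hr
    _ = M * (∫⁻ x, f x ^ ν.toReal ∂μ) ^ (1 / ν.toReal) := by
        rw [mul_rpow_of_nonneg _ _ (by positivity), one_div, rpow_rpow_inv hr0.ne']

end Schur

section IntegralOperator

variable {α 𝕜 : Type*} [MeasurableSpace α] {μ : Measure α} [RCLike 𝕜]
  {k : α → α → 𝕜} {κ : α → α → ℝ≥0∞} {M ν : ℝ≥0∞} {g : α → 𝕜}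

theorem lintegral_enorm_mul_le (hkκ : ∀ y x, ‖k y x‖ₑ ≤ κ y x) (y : α) :
    ∫⁻ x, ‖k y x * g x‖ₑ ∂μ ≤ ∫⁻ x, κ y x * ‖g x‖ₑ ∂μ :=
  lintegral_mono fun x => by rw [enorm_mul]; gcongr; exact hkκ y x

theorem eLpNorm_integral_mul_le [SFinite μ] (hκ : Measurable (uncurry κ))
    (hkκ : ∀ y x, ‖k y x‖ₑ ≤ κ y x) (hrow : ∀ᵐ y ∂μ, ∫⁻ x, κ y x ∂μ ≤ M) (hcol : ∀ᵐ x ∂μ, ∫⁻ y, κ y x ∂μ ≤ M)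
    (hν1 : 1 ≤ ν) (hν : ν ≠ ∞) (hg : AEStronglyMeasurable g μ) :
    eLpNorm (fun y => ∫ x, k y x * g x ∂μ) ν μ ≤ M * eLpNorm g ν μ := calc
  _ ≤ eLpNorm (fun y => ∫⁻ x, κ y x * ‖g x‖ₑ ∂μ) ν μ :=
      eLpNorm_mono_enorm fun y =>
        ((enorm_integral_le_lintegral_enorm _).trans (lintegral_enorm_mul_le hkκ y)).trans_eq
          (enorm_eq_self _).symm
  _ ≤ M * eLpNorm g ν μ := by
      simpa only [eLpNorm_enorm] using eLpNorm_lintegral_mul_le hκ hrow hcol hg.enorm hν1 hν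

theorem ae_integrable_mul [SFinite μ] (hk : StronglyMeasurable (uncurry k))
    (hκ : Measurable (uncurry κ)) (hkκ : ∀ y x, ‖k y x‖ₑ ≤ κ y x) (hrow : ∀ᵐ y ∂μ, ∫⁻ x, κ y x ∂μ ≤ M)
    (hcol : ∀ᵐ x ∂μ, ∫⁻ y, κ y x ∂μ ≤ M) (hν1 : 1 ≤ ν) (hν : ν ≠ ∞) (hM : M ≠ ∞)
    (hg : MemLp g ν μ) :
    ∀ᵐ y ∂μ, Integrable (fun x => k y x * g x) μ := by
  have hfin : eLpNorm (fun y => ∫⁻ x, κ y x * ‖g x‖ₑ ∂μ) ν μ < ∞ := by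
    refine (eLpNorm_lintegral_mul_le hκ hrow hcol hg.1.enorm hν1 hν).trans_lt ?_
    rw [eLpNorm_enorm]
    exact mul_lt_top hM.lt_top hg.2
  have hmeas : AEMeasurable (fun y => ∫⁻ x, κ y x * ‖g x‖ₑ ∂μ) μ :=
    (hκ.aemeasurable.mul hg.1.enorm.comp_snd).lintegral_prod_right'
  filter_upwards [ae_lt_top_of_eLpNorm_lt_top hmeas (zero_lt_one.trans_le hν1).ne' hν hfin]
    with y hy
  exact ⟨hk.of_uncurry_left.aestronglyMeasurable.mul hg.1,
    (lintegral_enorm_mul_le hkκ y).trans_lt hy⟩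

theorem exists_integralOperator [SFinite μ] [Fact (1 ≤ ν)] (hν : ν ≠ ∞)
    (hk : StronglyMeasurable (uncurry k)) (hκ : Measurable (uncurry κ))
    (hkκ : ∀ y x, ‖k y x‖ₑ ≤ κ y x) (hrow : ∀ᵐ y ∂μ, ∫⁻ x, κ y x ∂μ ≤ M)
    (hcol : ∀ᵐ x ∂μ, ∫⁻ y, κ y x ∂μ ≤ M) (hM : M ≠ ∞) :
    ∃ K : Lp 𝕜 ν μ →L[𝕜] Lp 𝕜 ν μ,
      (∀ g : Lp 𝕜 ν μ, K g =ᵐ[μ] fun y => ∫ x, k y x * g x ∂μ) ∧ ‖K‖ ≤ M.toReal := by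
  have hν1 : 1 ≤ ν := Fact.out
  set T : (α → 𝕜) → α → 𝕜 := fun g y => ∫ x, k y x * g x ∂μ
  have hT : ∀ g : Lp 𝕜 ν μ, eLpNorm (T g) ν μ ≤ M * eLpNorm g ν μ := fun g =>
    eLpNorm_integral_mul_le hκ hkκ hrow hcol hν1 hν (Lp.aestronglyMeasurable g)
  have hmem : ∀ g : Lp 𝕜 ν μ, MemLp (T g) ν μ := fun g =>
    ⟨(hk.aestronglyMeasurable.mul (Lp.aestronglyMeasurable g).comp_snd).integral_prod_right',
      (hT g).trans_lt (mul_lt_top hM.lt_top (Lp.eLpNorm_lt_top g))⟩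
  have hint : ∀ g : Lp 𝕜 ν μ, ∀ᵐ y ∂μ, Integrable (fun x => k y x * g x) μ := fun g =>
    ae_integrable_mul hk hκ hkκ hrow hcol hν1 hν hM (Lp.memLp g)
  have hcongr : ∀ {g₁ g₂ : α → 𝕜}, g₁ =ᵐ[μ] g₂ → T g₁ = T g₂ := fun h => funext fun y =>
    integral_congr_ae (h.mono fun x hx => congrArg (k y x * ·) hx)
  let L : Lp 𝕜 ν μ →ₗ[𝕜] Lp 𝕜 ν μ :=
    { toFun := fun g => (hmem g).toLp _
      map_add' := fun g₁ g₂ => by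
        rw [← MemLp.toLp_add]
        refine MemLp.toLp_congr _ _ ?_
        rw [hcongr (Lp.coeFn_add g₁ g₂)]
        filter_upwards [hint g₁, hint g₂] with y h₁ h₂
        simp only [T, Pi.add_apply, mul_add]
        exact integral_add h₁ h₂
      map_smul' := fun c g => by
        rw [RingHom.id_apply, ← MemLp.toLp_const_smul]
        refine MemLp.toLp_congr _ _ ?_
        rw [hcongr (Lp.coeFn_smul c g)]
        refine .of_forall fun y => ?_
        simp only [T, Pi.smul_apply, smul_eq_mul, mul_left_comm _ c]
        exact integral_const_mul c _ }
  refine ⟨L.mkContinuous M.toReal fun g => ?_, fun g => (hmem g).coeFn_toLp,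
    LinearMap.mkContinuous_norm_le _ toReal_nonneg _⟩
  rw [LinearMap.coe_mk, AddHom.coe_mk, Lp.norm_toLp, Lp.norm_def, ← toReal_mul]
  exact toReal_mono (mul_ne_top hM (Lp.eLpNorm_ne_top g)) (hT g)

end IntegralOperator

theorem ContinuousLinearMap.exists_inverse_one_sub {𝕜 E : Type*} [NontriviallyNormedField 𝕜]
    [NormedAddCommGroup E] [NormedSpace 𝕜 E] [CompleteSpace E] (K : E →L[𝕜] E) {r : ℝ}
    (hK : ‖K‖ ≤ r) (hr : r < 1) :
    ∃ Kinv : E →L[𝕜] E, Kinv.comp (1 - K) = 1 ∧ (1 - K).comp Kinv = 1 ∧ ‖Kinv‖ ≤ (1 - r)⁻¹ := by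
  have hK1 : ‖K‖ < 1 := hK.trans_lt hr
  refine ⟨∑' n, K ^ n, geom_series_mul_neg K hK1, mul_neg_geom_series K hK1, ?_⟩
  calc ‖∑' n, K ^ n‖ ≤ ‖(1 : E →L[𝕜] E)‖ - 1 + (1 - ‖K‖)⁻¹ := tsum_geometric_le_of_norm_lt_one K hK1
    _ ≤ (1 - r)⁻¹ := by
        have : (1 - ‖K‖)⁻¹ ≤ (1 - r)⁻¹ := inv_anti₀ (by linarith) (by linarith)
        have h1 : ‖(1 : E →L[𝕜] E)‖ ≤ 1 := ContinuousLinearMap.norm_id_le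
        linarith

theorem lintegral_Ioi_comp_const_add_le {f : ℝ → ℝ≥0∞} (hf : Measurable f) {a : ℝ} (ha : 0 ≤ a) :
    ∫⁻ s in Ioi 0, f (a + s) ≤ ∫⁻ s in Ioi 0, f s := by
  have h := (measurePreserving_add_left volume a).restrict_preimage (measurableSet_Ioi (a := a))
  have hpre : (a + ·) ⁻¹' Ioi a = Ioi (0 : ℝ) := by ext; simp
  rw [hpre] at h
  rw [h.lintegral_comp hf]
  exact lintegral_mono_set (Ioi_subset_Ioi ha)

section GLM

variable {q : ℝ → ℂ}

noncomputable def glmKernel (q : ℝ → ℂ) (y x : ℝ) : ℂ := ∫ s in Ioi 0, conj (q (y + s)) * q (s + x)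

noncomputable def glmMajorant (q : ℝ → ℂ) (y x : ℝ) : ℝ≥0∞ :=
  ∫⁻ s in Ioi 0, ‖q (y + s)‖ₑ * ‖q (s + x)‖ₑ

theorem enorm_glmKernel_le (q : ℝ → ℂ) (y x : ℝ) : ‖glmKernel q y x‖ₑ ≤ glmMajorant q y x :=
  (enorm_integral_le_lintegral_enorm _).trans_eq <| by simp [glmMajorant, enorm_mul]

theorem glmMajorant_comm (q : ℝ → ℂ) (y x : ℝ) : glmMajorant q y x = glmMajorant q x y :=
  lintegral_congr fun s => by rw [mul_comm, add_comm y, add_comm s]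

theorem stronglyMeasurable_glmKernel (hq : Measurable q) :
    StronglyMeasurable (uncurry (glmKernel q)) :=
  StronglyMeasurable.integral_prod_right
    (f := fun (z : ℝ × ℝ) s => conj (q (z.1 + s)) * q (s + z.2))
    ((Complex.continuous_conj.measurable.comp (hq.comp (by fun_prop))).mul
      (hq.comp (by fun_prop))).stronglyMeasurable

theorem measurable_glmMajorant (hq : Measurable q) : Measurable (uncurry (glmMajorant q)) :=
  Measurable.lintegral_prod_right (f := fun (z : ℝ × ℝ) s => ‖q (z.1 + s)‖ₑ * ‖q (s + z.2)‖ₑ)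
    (by fun_prop)

theorem lintegral_glmMajorant_le (hq : Measurable q) {y : ℝ} (hy : 0 ≤ y) :
    ∫⁻ x in Ioi 0, glmMajorant q y x ≤ (∫⁻ s in Ioi 0, ‖q s‖ₑ) ^ 2 := by
  have hq' : Measurable fun t => ‖q t‖ₑ := hq.enorm
  calc ∫⁻ x in Ioi 0, glmMajorant q y x
      = ∫⁻ s in Ioi 0, ‖q (y + s)‖ₑ * ∫⁻ x in Ioi 0, ‖q (s + x)‖ₑ := by
        simp only [glmMajorant]
        rw [lintegral_lintegral_swap (by fun_prop)]
        exact lintegral_congr fun s => lintegral_const_mul _ (by fun_prop)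
    _ ≤ ∫⁻ s in Ioi 0, ‖q (y + s)‖ₑ * ∫⁻ x in Ioi 0, ‖q x‖ₑ :=
        setLIntegral_mono' measurableSet_Ioi fun s hs =>
          mul_le_mul_right (lintegral_Ioi_comp_const_add_le hq' (le_of_lt hs)) _
    _ ≤ (∫⁻ s in Ioi 0, ‖q s‖ₑ) ^ 2 := by
        rw [lintegral_mul_const _ (by fun_prop), sq]
        exact mul_le_mul_left (lintegral_Ioi_comp_const_add_le hq' hy) _

theorem exists_glmOperator_inverse (ν : ℝ≥0∞) [Fact (1 ≤ ν)] (hν : ν ≠ ∞) (hq : Measurable q)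
    (hq1 : IntegrableOn q (Ioi 0)) {I₁ : ℝ} (hI₁ : I₁ = ∫ s in Ioi 0, ‖q s‖) (hI₁lt : I₁ < 1) :
    ∃ K : Lp ℂ ν (volume.restrict (Ioi (0:ℝ))) →L[ℂ] Lp ℂ ν (volume.restrict (Ioi (0:ℝ))),
      (∀ g : Lp ℂ ν (volume.restrict (Ioi (0:ℝ))),
        (K g : ℝ → ℂ) =ᵐ[volume.restrict (Ioi (0:ℝ))]
          fun y => ∫ x in Ioi 0, glmKernel q y x * g x) ∧
      ‖K‖ ≤ I₁ ^ 2 ∧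
      ∃ Kinv : Lp ℂ ν (volume.restrict (Ioi (0:ℝ))) →L[ℂ] Lp ℂ ν (volume.restrict (Ioi (0:ℝ))),
        Kinv.comp (1 - K) = 1 ∧ (1 - K).comp Kinv = 1 ∧ ‖Kinv‖ ≤ (1 - I₁ ^ 2)⁻¹ := by
  have hI₁0 : 0 ≤ I₁ := hI₁ ▸ integral_nonneg fun _ => norm_nonneg _
  have hN : ∫⁻ s in Ioi 0, ‖q s‖ₑ = ENNReal.ofReal I₁ := by
    rw [hI₁, ofReal_integral_norm_eq_lintegral_enorm hq1]
  have hrow : ∀ y ∈ Ioi (0:ℝ), ∫⁻ x in Ioi 0, glmMajorant q y x ≤ ENNReal.ofReal I₁ ^ 2 :=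
    fun y hy => hN ▸ lintegral_glmMajorant_le hq (le_of_lt hy)
  obtain ⟨K, hK, hKnorm⟩ := exists_integralOperator hν (stronglyMeasurable_glmKernel hq)
    (measurable_glmMajorant hq) (enorm_glmKernel_le q)
    ((ae_restrict_iff' measurableSet_Ioi).2 (.of_forall hrow))
    ((ae_restrict_iff' measurableSet_Ioi).2 (.of_forall fun x hx => by
      simpa only [glmMajorant_comm q _ x] using hrow x hx))
    (by finiteness)
  rw [toReal_pow, toReal_ofReal hI₁0] at hKnorm
  exact ⟨K, hK, hKnorm, K.exists_inverse_one_sub hKnorm (by nlinarith)⟩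

end GLM

theorem GLM_operator_invertible_general (p : ℂ → ℂ)
    (hp_entire : Differentiable ℂ p)
    (hp1 : Integrable (fun t : ℝ => p t))
    (I₁ : ℝ) (hI₁ : I₁ = ∫ s in Ioi (0:ℝ), ‖p s‖) (hI₁lt : I₁ < 1) :
    (∃ K : Lp ℂ 1 (volume.restrict (Ioi (0:ℝ))) →L[ℂ] Lp ℂ 1 (volume.restrict (Ioi (0:ℝ))),
      (∀ g : Lp ℂ 1 (volume.restrict (Ioi (0:ℝ))),
        (K g : ℝ → ℂ) =ᵐ[volume.restrict (Ioi (0:ℝ))]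
          fun y : ℝ => ∫ x in Ioi (0:ℝ),
            (∫ s in Ioi (0:ℝ), (starRingEnd ℂ) (p ((y : ℂ) + s)) * p ((s : ℂ) + x)) * g x) ∧
      ‖K‖ ≤ I₁ ^ 2 ∧
      ∃ Kinv : Lp ℂ 1 (volume.restrict (Ioi (0:ℝ))) →L[ℂ]
          Lp ℂ 1 (volume.restrict (Ioi (0:ℝ))),
        Kinv.comp (1 - K) = 1 ∧ (1 - K).comp Kinv = 1 ∧ ‖Kinv‖ ≤ (1 - I₁ ^ 2)⁻¹) ∧
    (∃ K : Lp ℂ 2 (volume.restrict (Ioi (0:ℝ))) →L[ℂ] Lp ℂ 2 (volume.restrict (Ioi (0:ℝ))),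
      (∀ g : Lp ℂ 2 (volume.restrict (Ioi (0:ℝ))),
        (K g : ℝ → ℂ) =ᵐ[volume.restrict (Ioi (0:ℝ))]
          fun y : ℝ => ∫ x in Ioi (0:ℝ),
            (∫ s in Ioi (0:ℝ), (starRingEnd ℂ) (p ((y : ℂ) + s)) * p ((s : ℂ) + x)) * g x) ∧
      ‖K‖ ≤ I₁ ^ 2 ∧
      ∃ Kinv : Lp ℂ 2 (volume.restrict (Ioi (0:ℝ))) →L[ℂ]
          Lp ℂ 2 (volume.restrict (Ioi (0:ℝ))),
        Kinv.comp (1 - K) = 1 ∧ (1 - K).comp Kinv = 1 ∧ ‖Kinv‖ ≤ (1 - I₁ ^ 2)⁻¹) := by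
  have hq : Measurable fun t : ℝ => p t :=
    (hp_entire.continuous.comp Complex.continuous_ofReal).measurable
  have hkernel : ∀ y x : ℝ, glmKernel (fun t : ℝ => p t) y x =
      ∫ s in Ioi (0:ℝ), (starRingEnd ℂ) (p ((y : ℂ) + s)) * p ((s : ℂ) + x) := by
    simp [glmKernel]
  simp only [← hkernel]
  exact ⟨exists_glmOperator_inverse 1 one_ne_top hq hp1.integrableOn hI₁ hI₁lt,
    exists_glmOperator_inverse 2 ofNat_ne_top hq hp1.integrableOn hI₁ hI₁lt⟩

/-- For `p ∈ B¹_σ` with `I₁ = ∫₀^∞ |p| < 1`, the GLM operator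
`K[g](y) = ∫₀^∞ (∫₀^∞ conj(p(y+s))·p(s+x) ds)·g(x) dx` is bounded on `L^ν([0,∞))`
(`ν = 1, 2`) with `‖K‖ ≤ I₁²`, and `I − K` is invertible with `‖(I − K)⁻¹‖ ≤ (1 − I₁²)⁻¹`. -/
theorem GLM_operator_invertible (σ : ℝ) (hσ : 0 < σ) (p : ℂ → ℂ)
    (hp_entire : Differentiable ℂ p)
    (hp_growth : ∃ C ≥ 0, ∀ z : ℂ, ‖p z‖ ≤ C * Real.exp (σ * |z.im|))
    (hp1 : Integrable (fun t : ℝ => p t))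
    (I₁ : ℝ) (hI₁ : I₁ = ∫ s in Ioi (0:ℝ), ‖p s‖) (hI₁lt : I₁ < 1) :
    (∃ K : Lp ℂ 1 (volume.restrict (Ioi (0:ℝ))) →L[ℂ] Lp ℂ 1 (volume.restrict (Ioi (0:ℝ))),
      (∀ g : Lp ℂ 1 (volume.restrict (Ioi (0:ℝ))),
        (K g : ℝ → ℂ) =ᵐ[volume.restrict (Ioi (0:ℝ))]
          fun y : ℝ => ∫ x in Ioi (0:ℝ),
            (∫ s in Ioi (0:ℝ), (starRingEnd ℂ) (p ((y : ℂ) + s)) * p ((s : ℂ) + x)) * g x) ∧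
      ‖K‖ ≤ I₁ ^ 2 ∧
      ∃ Kinv : Lp ℂ 1 (volume.restrict (Ioi (0:ℝ))) →L[ℂ]
          Lp ℂ 1 (volume.restrict (Ioi (0:ℝ))),
        Kinv.comp (1 - K) = 1 ∧ (1 - K).comp Kinv = 1 ∧ ‖Kinv‖ ≤ (1 - I₁ ^ 2)⁻¹) ∧
    (∃ K : Lp ℂ 2 (volume.restrict (Ioi (0:ℝ))) →L[ℂ] Lp ℂ 2 (volume.restrict (Ioi (0:ℝ))),
      (∀ g : Lp ℂ 2 (volume.restrict (Ioi (0:ℝ))),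
        (K g : ℝ → ℂ) =ᵐ[volume.restrict (Ioi (0:ℝ))]
          fun y : ℝ => ∫ x in Ioi (0:ℝ),
            (∫ s in Ioi (0:ℝ), (starRingEnd ℂ) (p ((y : ℂ) + s)) * p ((s : ℂ) + x)) * g x) ∧
      ‖K‖ ≤ I₁ ^ 2 ∧
      ∃ Kinv : Lp ℂ 2 (volume.restrict (Ioi (0:ℝ))) →L[ℂ]
          Lp ℂ 2 (volume.restrict (Ioi (0:ℝ))),
        Kinv.comp (1 - K) = 1 ∧ (1 - K).comp Kinv = 1 ∧ ‖Kinv‖ ≤ (1 - I₁ ^ 2)⁻¹) :=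
  GLM_operator_invertible_general p hp_entire hp1 I₁ hI₁ hI₁lt
end

section
/- Let σ > 0 and let ρ ∈ L²(ℝ) ∩ L^∞(ℝ) with support contained in [−σ,σ], and define p(t) = (1/(2π))·∫_{−σ}^{σ} ρ(ξ)·e^{iξt} dξ. Define the doubly infinite Hankel matrix 𝒫_{nm} = (π/σ)·p((m+n)·π/σ) for n, m ∈ ℤ. Then 𝒫 defines a bounded linear operator on ℓ²(ℤ): for every α ∈ ℓ²(ℤ), each series Σ_m 𝒫_{nm}·α_m converges and (Σ_{n∈ℤ} |Σ_{m∈ℤ} 𝒫_{nm}·α_m|²)^{1/2} ≤ ‖ρ‖_{L^∞}·‖α‖_{ℓ²}. -/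
/-!
The functions `e_m(ξ) = (2σ)^{-1/2} e^{iξmπ/σ}` are orthonormal in `L²(-σ, σ)` and
`𝒫_{nm} = ⟪e_{-n}, ρ e_m⟫`: the Hankel matrix is the matrix of multiplication by `ρ`, an operator
of norm at most `‖ρ‖_∞`, taken between two orthonormal families. For `α ∈ ℓ²` and
`f = ∑ α_m e_m` (so `‖f‖ = ‖α‖`) this gives `∑_m 𝒫_{nm} α_m = ⟪e_{-n}, ρ f⟫`, and Bessel's
inequality bounds `∑_n |⟪e_{-n}, ρ f⟫|²` by `‖ρ f‖² ≤ ‖ρ‖_∞² ‖α‖²`.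
-/

open MeasureTheory Set Complex
open scoped InnerProductSpace ComplexConjugate

theorem lp.norm_eq_sqrt_tsum_norm_sq {ι : Type*} {E : ι → Type*} [∀ i, NormedAddCommGroup (E i)]
    (f : lp E 2) : ‖f‖ = √(∑' i, ‖f i‖ ^ 2) := by
  rw [eq_comm, Real.sqrt_eq_iff_eq_sq (by positivity) (norm_nonneg f)]
  exact_mod_cast (lp.norm_rpow_eq_tsum (by norm_num) f).symm

theorem memℓp_two_of_summable_norm_sq {ι : Type*} {E : ι → Type*} [∀ i, NormedAddCommGroup (E i)]
    {f : ∀ i, E i} (hf : Summable fun i => ‖f i‖ ^ 2) : Memℓp f 2 :=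
  memℓp_gen (by exact_mod_cast hf)

section OperatorMatrix

variable {𝕜 E ι κ : Type*} [RCLike 𝕜] [NormedAddCommGroup E] [InnerProductSpace 𝕜 E]
  [CompleteSpace E] {v : κ → E}

theorem Orthonormal.hasSum_inner_map_linearIsometry (hv : Orthonormal 𝕜 v) (T : E →L[𝕜] E)
    (y : E) (α : lp (fun _ : κ => 𝕜) 2) :
    HasSum (fun m => ⟪y, T (v m)⟫_𝕜 * α m) ⟪y, T (hv.orthogonalFamily.linearIsometry α)⟫_𝕜 := by
  have h := ((innerSL 𝕜 y).comp T).hasSum (hv.orthogonalFamily.hasSum_linearIsometry α)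
  simpa [inner_smul_right, mul_comm] using h

theorem Orthonormal.matrix_inner_map_bounded {u : ι → E} (hu : Orthonormal 𝕜 u)
    (hv : Orthonormal 𝕜 v) (T : E →L[𝕜] E) (α : lp (fun _ : κ => 𝕜) 2) :
    (∀ n, Summable fun m => ⟪u n, T (v m)⟫_𝕜 * α m) ∧
      Summable (fun n => ‖∑' m, ⟪u n, T (v m)⟫_𝕜 * α m‖ ^ 2) ∧
      √(∑' n, ‖∑' m, ⟪u n, T (v m)⟫_𝕜 * α m‖ ^ 2) ≤ ‖T‖ * ‖α‖ := by
  set x := hv.orthogonalFamily.linearIsometry α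
  have hrow n := hv.hasSum_inner_map_linearIsometry T (u n) α
  simp only [fun n => (hrow n).tsum_eq]
  refine ⟨fun n => (hrow n).summable, hu.inner_products_summable (T x), ?_⟩
  calc √(∑' n, ‖⟪u n, T x⟫_𝕜‖ ^ 2) ≤ √(‖T x‖ ^ 2) :=
        Real.sqrt_le_sqrt (hu.tsum_inner_products_le (T x))
    _ = ‖T x‖ := Real.sqrt_sq (norm_nonneg _)
    _ ≤ ‖T‖ * ‖x‖ := T.le_opNorm x
    _ = ‖T‖ * ‖α‖ := by rw [LinearIsometry.norm_map]

end OperatorMatrix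

section MultiplicationOperator

variable {α 𝕜 : Type*} [MeasurableSpace α] {μ : Measure α} [RCLike 𝕜]

noncomputable def multiplicationOperator (g : Lp 𝕜 ⊤ μ) : Lp 𝕜 2 μ →L[𝕜] Lp 𝕜 2 μ :=
  (ContinuousLinearMap.mul 𝕜 𝕜).holderL μ ⊤ 2 2 g

theorem coeFn_multiplicationOperator (g : Lp 𝕜 ⊤ μ) (f : Lp 𝕜 2 μ) :
    multiplicationOperator g f =ᵐ[μ] fun x => g x * f x :=
  (ContinuousLinearMap.mul 𝕜 𝕜).coeFn_holder g f

theorem norm_multiplicationOperator_le (g : Lp 𝕜 ⊤ μ) : ‖multiplicationOperator g‖ ≤ ‖g‖ :=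
  calc ‖multiplicationOperator g‖ ≤ ‖(ContinuousLinearMap.mul 𝕜 𝕜).holderL μ ⊤ 2 2‖ * ‖g‖ :=
        ContinuousLinearMap.le_opNorm _ g
    _ ≤ 1 * ‖g‖ := by
        gcongr
        exact (ContinuousLinearMap.norm_holderL_le _).trans (ContinuousLinearMap.opNorm_mul_le 𝕜 𝕜)
    _ = ‖g‖ := one_mul _

end MultiplicationOperator

theorem ofReal_sqrt_inv_mul_self {x : ℝ} (hx : 0 ≤ x) :
    (√x : ℂ)⁻¹ * (√x : ℂ)⁻¹ = (x : ℂ)⁻¹ := by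
  rw [← mul_inv, ← ofReal_mul, Real.mul_self_sqrt hx]

noncomputable def planeWave (t ξ : ℝ) : ℂ := exp (I * ξ * t)

theorem planeWave_eq_exp_ofReal_mul_I (t ξ : ℝ) : planeWave t ξ = exp ((ξ * t : ℝ) * I) := by
  rw [planeWave]; push_cast; ring_nf

theorem norm_planeWave (t ξ : ℝ) : ‖planeWave t ξ‖ = 1 := by
  rw [planeWave_eq_exp_ofReal_mul_I, norm_exp_ofReal_mul_I]

theorem conj_planeWave (t ξ : ℝ) : conj (planeWave t ξ) = planeWave (-t) ξ := by
  simp only [planeWave_eq_exp_ofReal_mul_I, ← exp_conj, map_mul, conj_ofReal, conj_I]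
  push_cast; ring_nf

theorem planeWave_mul (s t ξ : ℝ) : planeWave s ξ * planeWave t ξ = planeWave (s + t) ξ := by
  simp only [planeWave, ← exp_add]; push_cast; ring_nf

theorem continuous_planeWave (t : ℝ) : Continuous (planeWave t) := by
  unfold planeWave; fun_prop

theorem memLp_planeWave {μ : Measure ℝ} [IsFiniteMeasure μ] (t : ℝ) (p : ENNReal) :
    MemLp (planeWave t) p μ :=
  MemLp.of_bound (continuous_planeWave t).aestronglyMeasurable 1
    (.of_forall fun ξ => (norm_planeWave t ξ).le)

theorem integral_planeWave {σ : ℝ} (hσ : 0 < σ) (k : ℤ) :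
    ∫ ξ in Ioc (-σ) σ, planeWave (k * Real.pi / σ) ξ = if k = 0 then (2 * σ : ℂ) else 0 := by
  rw [← intervalIntegral.integral_of_le (by linarith)]
  split_ifs with hk
  · simp only [planeWave, hk, Int.cast_zero, zero_mul, zero_div, ofReal_zero, mul_zero, exp_zero,
      intervalIntegral.integral_const, sub_neg_eq_add, real_smul, ofReal_add, mul_one]
    ring
  have hc : I * (k * Real.pi / σ : ℝ) ≠ 0 := by
    have : (k * Real.pi / σ : ℝ) ≠ 0 := by
      have : (k : ℝ) ≠ 0 := by exact_mod_cast hk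
      positivity
    exact mul_ne_zero I_ne_zero (by exact_mod_cast this)
  have hlin (ξ : ℝ) : I * ξ * (k * Real.pi / σ : ℝ) = I * (k * Real.pi / σ : ℝ) * ξ := by ring
  simp only [planeWave, hlin]
  rw [integral_exp_mul_complex hc, div_eq_zero_iff, sub_eq_zero, exp_eq_exp_iff_exists_int]
  refine .inl ⟨k, ?_⟩
  have hσ' : (σ : ℂ) ≠ 0 := by exact_mod_cast hσ.ne'
  push_cast
  field_simp
  ring

section FourierVectors

variable (σ : ℝ)

noncomputable def fourierVec (m : ℤ) : Lp ℂ 2 (volume.restrict (Ioc (-σ) σ)) :=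
  (√(2 * σ) : ℂ)⁻¹ • (memLp_planeWave (m * Real.pi / σ) 2).toLp

theorem coeFn_fourierVec (m : ℤ) :
    fourierVec σ m =ᵐ[volume.restrict (Ioc (-σ) σ)]
      fun ξ => (√(2 * σ) : ℂ)⁻¹ * planeWave (m * Real.pi / σ) ξ := by
  set w := (memLp_planeWave (μ := volume.restrict (Ioc (-σ) σ)) (m * Real.pi / σ) 2).toLp
  filter_upwards [Lp.coeFn_smul (√(2 * σ) : ℂ)⁻¹ w,
    (memLp_planeWave (m * Real.pi / σ) 2).coeFn_toLp] with ξ hsmul htoLp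
  rw [fourierVec, hsmul, Pi.smul_apply, htoLp, smul_eq_mul]

theorem inner_fourierVec_left (n : ℤ) (f : Lp ℂ 2 (volume.restrict (Ioc (-σ) σ))) :
    ⟪fourierVec σ n, f⟫_ℂ =
      (√(2 * σ) : ℂ)⁻¹ * ∫ ξ in Ioc (-σ) σ, planeWave (-(n * Real.pi / σ)) ξ * f ξ := by
  rw [fourierVec, inner_smul_left, map_inv₀, conj_ofReal, L2.inner_def]
  congr 1
  refine integral_congr_ae ?_
  filter_upwards [(memLp_planeWave (n * Real.pi / σ) 2).coeFn_toLp] with ξ hξ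
  rw [hξ, RCLike.inner_apply, conj_planeWave, mul_comm]

variable {σ}

theorem orthonormal_fourierVec (hσ : 0 < σ) : Orthonormal ℂ (fourierVec σ) := by
  rw [orthonormal_iff_ite]
  intro n m
  have hexp (ξ : ℝ) : planeWave (-(n * Real.pi / σ)) ξ * planeWave (m * Real.pi / σ) ξ =
      planeWave ((m - n : ℤ) * Real.pi / σ) ξ := by
    rw [planeWave_mul]; push_cast; ring_nf
  rw [inner_fourierVec_left, integral_congr_ae ((coeFn_fourierVec σ m).mono fun ξ hξ => by
      rw [hξ, mul_left_comm, hexp]), integral_const_mul, integral_planeWave hσ, ← mul_assoc,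
    ofReal_sqrt_inv_mul_self (by positivity)]
  rcases eq_or_ne n m with rfl | hnm
  · have hσ0 : (σ : ℂ) ≠ 0 := by exact_mod_cast hσ.ne'
    simp only [sub_self, if_true]
    push_cast
    field_simp
  · simp [sub_eq_zero, hnm, hnm.symm]

end FourierVectors

theorem inner_fourierVec_neg_multiplicationOperator {σ : ℝ} (hσ : 0 ≤ σ) {ρ : ℝ → ℂ}
    (hρ : MemLp ρ ⊤ (volume.restrict (Ioc (-σ) σ))) (n m : ℤ) :
    ⟪fourierVec σ (-n), multiplicationOperator (hρ.toLp ρ) (fourierVec σ m)⟫_ℂ =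
      (2 * σ : ℂ)⁻¹ * ∫ ξ in -σ..σ, ρ ξ * planeWave ((m + n) * Real.pi / σ) ξ := by
  have hexp (ξ : ℝ) : planeWave (-(-n * Real.pi / σ)) ξ * planeWave (m * Real.pi / σ) ξ =
      planeWave ((m + n) * Real.pi / σ) ξ := by
    rw [planeWave_mul]; ring_nf
  have hc : (√(2 * σ) : ℂ)⁻¹ * (√(2 * σ) : ℂ)⁻¹ = (2 * σ : ℂ)⁻¹ := by
    exact_mod_cast ofReal_sqrt_inv_mul_self (by positivity : 0 ≤ 2 * σ)
  rw [inner_fourierVec_left, intervalIntegral.integral_of_le (by linarith), ← integral_const_mul,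
    ← integral_const_mul]
  refine integral_congr_ae ?_
  filter_upwards [coeFn_multiplicationOperator (hρ.toLp ρ) (fourierVec σ m), hρ.coeFn_toLp,
    coeFn_fourierVec σ m] with ξ hmul hρξ hvec
  rw [hmul, hρξ, hvec, Int.cast_neg, ← hc, ← hexp]
  ring

theorem hankel_matrix_bounded_general (σ : ℝ) (hσ : 0 < σ) (ρ : ℝ → ℂ)
    (hρtop : MemLp ρ ⊤ volume)
    (p : ℝ → ℂ)
    (hp : ∀ t : ℝ, p t = (1 / (2 * Real.pi)) *
      ∫ ξ in (-σ)..σ, ρ ξ * Complex.exp (Complex.I * ξ * t))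
    (P : ℤ → ℤ → ℂ)
    (hP : ∀ n m : ℤ, P n m = (Real.pi / σ : ℝ) * p ((m + n) * Real.pi / σ)) :
    ∀ α : ℤ → ℂ, (Summable fun n : ℤ => ‖α n‖ ^ 2) →
      (∀ n : ℤ, Summable fun m : ℤ => P n m * α m) ∧
      (Summable fun n : ℤ => ‖∑' m : ℤ, P n m * α m‖ ^ 2) ∧
      Real.sqrt (∑' n : ℤ, ‖∑' m : ℤ, P n m * α m‖ ^ 2) ≤
        (eLpNorm ρ ⊤ volume).toReal * Real.sqrt (∑' n : ℤ, ‖α n‖ ^ 2) := by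
  intro α hα
  have hρ : MemLp ρ ⊤ (volume.restrict (Ioc (-σ) σ)) := hρtop.restrict _
  set T := multiplicationOperator (hρ.toLp ρ)
  have hPT : P = fun n m => ⟪fourierVec σ (-n), T (fourierVec σ m)⟫_ℂ := by
    ext n m
    have hσ0 : (σ : ℂ) ≠ 0 := by exact_mod_cast hσ.ne'
    have hπ0 : (Real.pi : ℂ) ≠ 0 := by exact_mod_cast Real.pi_ne_zero
    rw [hP, hp, inner_fourierVec_neg_multiplicationOperator hσ.le, ← mul_assoc]
    congr 1
    push_cast
    field_simp
  have hT : ‖T‖ ≤ (eLpNorm ρ ⊤ volume).toReal := by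
    refine (norm_multiplicationOperator_le _).trans ?_
    rw [Lp.norm_toLp]
    exact ENNReal.toReal_mono hρtop.2.ne (eLpNorm_mono_measure _ Measure.restrict_le_self)
  obtain ⟨hrow, hsq, hbound⟩ :=
    ((orthonormal_fourierVec hσ).comp _ neg_injective).matrix_inner_map_bounded
      (orthonormal_fourierVec hσ) T ⟨α, memℓp_two_of_summable_norm_sq hα⟩
  rw [lp.norm_eq_sqrt_tsum_norm_sq] at hbound
  subst hPT
  exact ⟨hrow, hsq, hbound.trans (by gcongr)⟩

/-- The doubly infinite Hankel matrix `𝒫_{nm} = (π/σ)·p((m+n)π/σ)` built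
from a bandlimited `p` (with `ρ ∈ L² ∩ L^∞` supported in `[−σ,σ]`) defines a bounded
linear operator on `ℓ²(ℤ)` with norm at most `‖ρ‖_∞`. -/
theorem hankel_matrix_bounded (σ : ℝ) (hσ : 0 < σ) (ρ : ℝ → ℂ)
    (hρ2 : MemLp ρ 2 volume) (hρtop : MemLp ρ ⊤ volume)
    (hsupp : Function.support ρ ⊆ Icc (-σ) σ)
    (p : ℝ → ℂ)
    (hp : ∀ t : ℝ, p t = (1 / (2 * Real.pi)) *
      ∫ ξ in (-σ)..σ, ρ ξ * Complex.exp (Complex.I * ξ * t))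
    (P : ℤ → ℤ → ℂ)
    (hP : ∀ n m : ℤ, P n m = (Real.pi / σ : ℝ) * p ((m + n) * Real.pi / σ)) :
    ∀ α : ℤ → ℂ, (Summable fun n : ℤ => ‖α n‖ ^ 2) →
      (∀ n : ℤ, Summable fun m : ℤ => P n m * α m) ∧
      (Summable fun n : ℤ => ‖∑' m : ℤ, P n m * α m‖ ^ 2) ∧
      Real.sqrt (∑' n : ℤ, ‖∑' m : ℤ, P n m * α m‖ ^ 2) ≤
        (eLpNorm ρ ⊤ volume).toReal * Real.sqrt (∑' n : ℤ, ‖α n‖ ^ 2) :=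
  hankel_matrix_bounded_general σ hσ ρ hρtop p hp P hP
end

section
/- Let σ > 0 and let m, n ∈ ℤ with m ≠ n. Then ∫₀^∞ ψ_m(s)·ψ_n(s) ds = ((−1)^{m+n} / (2π²·(n−m)))·(Cin(2|m|π) − Cin(2|n|π)), where Cin(x) = ∫₀^x (1 − cos t)/t dt is the (even) cosine integral. -/
open MeasureTheory Set

/-- The normalized translated sinc functions `ψ_n(t) = √(σ/π)·sin(σt − nπ)/(σt − nπ)`. -/
noncomputable def psi (σ : ℝ) (n : ℤ) (t : ℝ) : ℝ :=
  Real.sqrt (σ / Real.pi) * (Real.sin (σ * t - n * Real.pi) / (σ * t - n * Real.pi))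

/-!
Write `q t = (1 - cos t) / t`. Since `sin (u - mπ) sin (u - nπ) = (-1)^(m+n) sin² u` and
`2 sin² u = 1 - cos (2u - 2kπ)` for every integer `k`, partial fractions turn
`sin (u - mπ) / (u - mπ) · sin (u - nπ) / (u - nπ)` into `(-1)^(m+n) / ((n - m)π) · (q (2u - 2nπ) - q (2u - 2mπ))`.
Integrating over `[0, R]` gives differences of `Cin`; the two terms at the moving endpoint differ by
an integral of `q` over an interval of fixed length near `2R`, which vanishes as `R → ∞` because
`|q t| ≤ 2 / t`, and `Cin` is even. The product is integrable on `(0, ∞)` since `sin x / x` is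
square integrable, so the improper integral is that limit.
-/

open Filter Topology Real intervalIntegral

noncomputable def cin (x : ℝ) : ℝ := ∫ t in (0 : ℝ)..x, (1 - cos t) / t

-- Also at `t = 0`, where Lean's `x / 0 = 0` makes both sides vanish; hence the integrand of `cin`
-- is continuous.
lemma one_sub_cos_div_eq_sin_mul_sinc (t : ℝ) : (1 - cos t) / t = sin (t / 2) * sinc (t / 2) := by
  rcases eq_or_ne t 0 with rfl | ht
  · simp
  have hcos : cos t = 1 - 2 * sin (t / 2) ^ 2 := by
    have h := cos_two_mul' (t / 2)
    rw [show 2 * (t / 2) = t by ring, cos_sq'] at h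
    linarith
  rw [sinc_of_ne_zero (div_ne_zero ht two_ne_zero), hcos]
  field_simp
  ring

lemma continuous_one_sub_cos_div : Continuous fun t : ℝ => (1 - cos t) / t := by
  simp only [one_sub_cos_div_eq_sin_mul_sinc]
  fun_prop

lemma cin_sub_cin (x y : ℝ) : cin y - cin x = ∫ t in x..y, (1 - cos t) / t :=
  integral_interval_sub_left (continuous_one_sub_cos_div.intervalIntegrable _ _)
    (continuous_one_sub_cos_div.intervalIntegrable _ _)

lemma cin_neg (x : ℝ) : cin (-x) = cin x := by
  have h := integral_comp_neg (a := 0) (b := x) (fun t : ℝ => (1 - cos t) / t)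
  simp only [cos_neg, div_neg, intervalIntegral.integral_neg, neg_zero] at h
  rw [cin, integral_symm, ← h, neg_neg, cin]

lemma cin_abs (x : ℝ) : cin |x| = cin x := by
  rcases abs_choice x with h | h <;> rw [h]
  exact cin_neg x

lemma abs_one_sub_cos_div_le {t : ℝ} (ht : 0 < t) : |(1 - cos t) / t| ≤ 2 / t := by
  rw [abs_div, abs_of_pos ht, abs_of_nonneg (sub_nonneg.2 (cos_le_one t))]
  gcongr
  linarith [neg_one_le_cos t]

lemma tendsto_cin_add_sub_cin (c : ℝ) : Tendsto (fun x => cin (x + c) - cin x) atTop (𝓝 0) := by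
  have hbound : ∀ x > |c|, ‖cin (x + c) - cin x‖ ≤ 2 / (x - |c|) * |c| := by
    intro x hx
    have hq : ∀ t ∈ uIoc x (x + c), ‖(1 - cos t) / t‖ ≤ 2 / (x - |c|) := by
      intro t ht
      have hlt : x - |c| < t := by
        rcases min_lt_iff.1 ht.1 with h | h <;> linarith [neg_abs_le c, abs_nonneg c]
      refine (abs_one_sub_cos_div_le (by linarith)).trans ?_
      gcongr
    simpa [cin_sub_cin] using intervalIntegral.norm_integral_le_of_norm_le_const hq
  refine squeeze_zero_norm' (eventually_gt_atTop |c| |>.mono hbound) ?_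
  have hshift : Tendsto (fun x => x - |c|) atTop atTop :=
    tendsto_atTop_add_const_right _ _ tendsto_id
  simpa [div_eq_mul_inv] using (hshift.inv_tendsto_atTop.const_mul 2).mul_const |c|

lemma integral_one_sub_cos_div_comp_two_mul_sub (R c : ℝ) :
    ∫ u in (0 : ℝ)..R, (1 - cos (2 * u - c)) / (2 * u - c) = (cin (2 * R - c) - cin (-c)) / 2 := by
  rw [integral_comp_mul_sub (fun t => (1 - cos t) / t) two_ne_zero, ← cin_sub_cin, mul_zero,
    zero_sub, smul_eq_mul]
  ring

lemma sq_sin_div_le (x : ℝ) : (sin x / x) ^ 2 ≤ 2 * (1 + x ^ 2)⁻¹ := by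
  rcases eq_or_ne x 0 with rfl | hx
  · norm_num
  have hsin : sin x ^ 2 ≤ x ^ 2 := sq_le_sq.2 abs_sin_le_abs
  rw [div_pow, ← div_eq_mul_inv, div_le_div_iff₀ (by positivity) (by positivity)]
  nlinarith [sin_sq_le_one x]

lemma memLp_two_sin_sub_div (a : ℝ) : MemLp (fun u => sin (u - a) / (u - a)) 2 volume := by
  have hmeas : AEStronglyMeasurable (fun u => sin (u - a) / (u - a)) volume :=
    Measurable.aestronglyMeasurable (by fun_prop)
  refine (memLp_two_iff_integrable_sq hmeas).2 ?_
  refine ((integrable_inv_one_add_sq.comp_sub_right a).const_mul 2).mono' (by fun_prop) ?_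
  refine ae_of_all _ fun u => ?_
  rw [Real.norm_eq_abs, abs_of_nonneg (sq_nonneg _)]
  exact sq_sin_div_le (u - a)

lemma integrable_sin_sub_div_mul_sin_sub_div (a b : ℝ) :
    Integrable fun u => sin (u - a) / (u - a) * (sin (u - b) / (u - b)) :=
  (memLp_two_sin_sub_div a).integrable_mul (memLp_two_sin_sub_div b)

lemma sin_sub_div_mul_sin_sub_div (m n : ℤ) (hmn : m ≠ n) (u : ℝ) :
    sin (u - m * π) / (u - m * π) * (sin (u - n * π) / (u - n * π)) =
      (-1) ^ (m + n) / ((n - m) * π) *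
        ((1 - cos (2 * u - 2 * n * π)) / (2 * u - 2 * n * π) -
          (1 - cos (2 * u - 2 * m * π)) / (2 * u - 2 * m * π)) := by
  have hcos : ∀ k : ℤ, cos (2 * u - 2 * k * π) = 1 - 2 * sin u ^ 2 := fun k => by
    rw [show 2 * u - 2 * k * π = 2 * u - k * (2 * π) by ring, cos_sub_int_mul_two_pi, cos_two_mul,
      cos_sq']
    ring
  rcases eq_or_ne u (m * π) with rfl | hum
  · simp [hcos]
  rcases eq_or_ne u (n * π) with rfl | hun
  · simp [hcos]
  have hx : u - m * π ≠ 0 := sub_ne_zero.2 hum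
  have hy : u - n * π ≠ 0 := sub_ne_zero.2 hun
  have hxy : (u - m * π) - (u - n * π) ≠ 0 := by
    rw [sub_sub_sub_cancel_left, ← sub_mul]
    exact mul_ne_zero (sub_ne_zero.2 (mod_cast hmn.symm)) pi_ne_zero
  rw [sin_sub_int_mul_pi, sin_sub_int_mul_pi, hcos, hcos, zpow_add₀ (by norm_num),
    show ((n : ℝ) - m) * π = (u - m * π) - (u - n * π) by ring,
    show 2 * u - 2 * n * π = 2 * (u - n * π) by ring,
    show 2 * u - 2 * m * π = 2 * (u - m * π) by ring]
  generalize u - m * π = x, u - n * π = y at *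
  field_simp
  ring

lemma integral_sin_sub_div_mul_sin_sub_div (m n : ℤ) (hmn : m ≠ n) (R : ℝ) :
    ∫ u in (0 : ℝ)..R, sin (u - m * π) / (u - m * π) * (sin (u - n * π) / (u - n * π)) =
      (-1) ^ (m + n) / (2 * (n - m) * π) *
        (cin (2 * R - 2 * n * π) - cin (2 * R - 2 * m * π) +
          (cin (2 * m * π) - cin (2 * n * π))) := by
  have hint : ∀ c : ℝ,
      IntervalIntegrable (fun u => (1 - cos (2 * u - c)) / (2 * u - c)) volume 0 R :=
    fun c => (continuous_one_sub_cos_div.comp (by fun_prop)).intervalIntegrable _ _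
  simp only [sin_sub_div_mul_sin_sub_div m n hmn]
  rw [intervalIntegral.integral_const_mul, integral_sub (hint _) (hint _),
    integral_one_sub_cos_div_comp_two_mul_sub, integral_one_sub_cos_div_comp_two_mul_sub, cin_neg,
    cin_neg]
  field_simp
  ring

lemma integral_Ioi_sin_sub_div_mul_sin_sub_div (m n : ℤ) (hmn : m ≠ n) :
    ∫ u in Ioi 0, sin (u - m * π) / (u - m * π) * (sin (u - n * π) / (u - n * π)) =
      (-1) ^ (m + n) / (2 * (n - m) * π) * (cin (2 * m * π) - cin (2 * n * π)) := by
  refine tendsto_nhds_unique (intervalIntegral_tendsto_integral_Ioi 0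
    (integrable_sin_sub_div_mul_sin_sub_div _ _).integrableOn tendsto_id) ?_
  simp only [integral_sin_sub_div_mul_sin_sub_div m n hmn]
  have htail :
      Tendsto (fun R => cin (2 * R - 2 * n * π) - cin (2 * R - 2 * m * π)) atTop (𝓝 0) := by
    have h : Tendsto (fun R : ℝ => 2 * R - 2 * m * π) atTop atTop :=
      tendsto_atTop_add_const_right _ _ (tendsto_id.const_mul_atTop two_pos)
    convert (tendsto_cin_add_sub_cin (2 * m * π - 2 * n * π)).comp h using 3
    simp only [Function.comp_apply]
    ring_nf
  simpa using (htail.add_const _).const_mul ((-1 : ℝ) ^ (m + n) / (2 * (n - m) * π))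

lemma psi_mul_psi (σ : ℝ) (hσ : 0 ≤ σ) (m n : ℤ) (s : ℝ) :
    psi σ m s * psi σ n s = σ / π *
      (sin (σ * s - m * π) / (σ * s - m * π) * (sin (σ * s - n * π) / (σ * s - n * π))) := by
  rw [psi, psi, mul_mul_mul_comm, mul_self_sqrt (by positivity)]

/-- off-diagonal entries of the quadrature matrix:
`∫₀^∞ ψ_m ψ_n = ((−1)^{m+n}/(2π²(n−m)))·(Cin(2|m|π) − Cin(2|n|π))` for `m ≠ n`,
where `Cin(x) = ∫₀^x (1 − cos t)/t dt`. -/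
theorem quadrature_matrix_offdiagonal (σ : ℝ) (hσ : 0 < σ) (m n : ℤ) (hmn : m ≠ n) :
    ∫ s in Ioi (0:ℝ), psi σ m s * psi σ n s =
      ((-1 : ℝ) ^ (m + n) / (2 * Real.pi ^ 2 * ((n : ℝ) - (m : ℝ)))) *
        ((∫ t in (0:ℝ)..(2 * |(m : ℝ)| * Real.pi), (1 - Real.cos t) / t) -
          ∫ t in (0:ℝ)..(2 * |(n : ℝ)| * Real.pi), (1 - Real.cos t) / t) := by
  have hcin : ∀ k : ℤ, cin (2 * k * π) = cin (2 * |(k : ℝ)| * π) := fun k => by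
    rw [← cin_abs, abs_mul, abs_mul, abs_two, abs_of_pos pi_pos]
  simp only [psi_mul_psi σ hσ.le, MeasureTheory.integral_const_mul]
  rw [integral_comp_mul_left_Ioi (fun u => sin (u - m * π) / (u - m * π) *
      (sin (u - n * π) / (u - n * π))) 0 hσ, mul_zero,
    integral_Ioi_sin_sub_div_mul_sin_sub_div m n hmn, hcin, hcin, smul_eq_mul]
  unfold cin
  field_simp
end
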